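/- arXiv:1606.08752 — 8 statements merged into one kernel-verified Lean document; each statement's English description precedes it below -/
import Mathlib

section
/- For f(x,y) = (x^2 + y, y^2 + x), every critical point (x,y) (i.e., with 4xy = 1) satisfies 2^8 u^2 v^2 - 2^8 u^3 - 2^8 v^3 + 2^5 * 9 * u * v - 27 = 0 where (u,v) = f(x,y). That is, f maps its critical set into the quartic curve {2^8 x^2 y^2 - 2^8 x^3 - 2^8 y^3 + 288 xy - 27 = 0}. -/
/-- `f(x,y) = (x²+y, y²+x)` maps its critical set `{4xy = 1}` into the quartic
`2⁸x²y² - 2⁸x³ - 2⁸y³ + 288xy - 27 = 0`. -/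
theorem stmt_1 (x y : ℂ) (h : 4 * x * y = 1) :
    2 ^ 8 * (x ^ 2 + y) ^ 2 * (y ^ 2 + x) ^ 2 - 2 ^ 8 * (x ^ 2 + y) ^ 3
      - 2 ^ 8 * (y ^ 2 + x) ^ 3 + 2 ^ 5 * 9 * (x ^ 2 + y) * (y ^ 2 + x) - 27 = 0 := by
  linear_combination (27 - 32*y^3 - 180*x*y + 128*x*y^4 + 272*x^2*y^2 - 32*x^3
    + 64*x^3*y^3 + 128*x^4*y) * h
end

section
/- Let Φ = a(x) y^2 + b(x) y + c(x) be a polynomial in C[x_1,...,x_n, y] with gcd(a, b, c) = 1 and a ≠ 0. Then Φ is reducible in C[x_1,...,x_n, y] if and only if b^2 - 4ac is a square in C[x_1,...,x_n]. -/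
/-!
The gcd condition makes `Φ` primitive, so by Gauss's lemma (ℂ[x₁,…,xₙ] is a UFD) `Φ` is
irreducible iff it is irreducible over the fraction field `K`. Over `K` a quadratic is reducible
iff it has a root, i.e. iff its discriminant is a square in `K`; and a square in `K` of an element
of the integrally closed ring ℂ[x₁,…,xₙ] is already a square there.
-/

open Polynomial

theorem map_discrim {R S : Type*} [CommRing R] [CommRing S] (f : R →+* S) (a b c : R) :
    f (discrim a b c) = discrim (f a) (f b) (f c) := by
  simp [discrim, map_ofNat]

theorem Polynomial.not_irreducible_quadratic_iff {K : Type*} [Field K] [NeZero (2 : K)]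
    {a b c : K} (ha : a ≠ 0) :
    ¬ Irreducible (C a * X ^ 2 + C b * X + C c) ↔ ∃ s, discrim a b c = s ^ 2 := by
  have hdeg : (C a * X ^ 2 + C b * X + C c).natDegree = 2 := natDegree_quadratic ha
  have hne : C a * X ^ 2 + C b * X + C c ≠ 0 := ne_zero_of_natDegree_gt (n := 0) (by omega)
  rw [irreducible_iff_roots_eq_zero_of_degree_le_three (by omega) (by omega),
    Multiset.eq_zero_iff_forall_notMem]
  simp only [not_forall, not_not, mem_roots hne, IsRoot.def, eval_add, eval_mul, eval_pow,
    eval_C, eval_X]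
  constructor
  · rintro ⟨x, hx⟩
    exact ⟨2 * a * x + b, discrim_eq_sq_of_quadratic_eq_zero (by linear_combination hx)⟩
  · rintro ⟨s, hs⟩
    obtain ⟨x, hx⟩ := exists_quadratic_eq_zero ha ⟨s, hs.trans (sq s)⟩
    exact ⟨x, by linear_combination hx⟩

theorem IsIntegrallyClosed.exists_eq_sq_of_algebraMap_eq_sq {R K : Type*} [CommRing R]
    [IsDomain R] [IsIntegrallyClosed R] [Field K] [Algebra R K] [IsFractionRing R K] {r : R}
    {t : K} (ht : algebraMap R K r = t ^ 2) : ∃ s : R, r = s ^ 2 := by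
  obtain ⟨s, rfl⟩ := exists_algebraMap_eq_of_isIntegral_pow two_pos (ht ▸ isIntegral_algebraMap)
  exact ⟨s, IsFractionRing.injective R K (by rw [ht, map_pow])⟩

theorem Polynomial.isPrimitive_quadratic {R : Type*} [CommSemiring R] {a b c : R}
    (h : ∀ d, d ∣ a → d ∣ b → d ∣ c → IsUnit d) : (C a * X ^ 2 + C b * X + C c).IsPrimitive := by
  intro d hd
  rw [C_dvd_iff_dvd_coeff] at hd
  refine h d ?_ ?_ ?_
  · simpa using hd 2
  · simpa using hd 1
  · simpa using hd 0

theorem Polynomial.not_irreducible_quadratic_iff_of_isGCDMonoid {R : Type*} [CommRing R]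
    [IsDomain R] [IsGCDMonoid R] [NeZero (2 : R)] {a b c : R} (ha : a ≠ 0)
    (hgcd : ∀ d, d ∣ a → d ∣ b → d ∣ c → IsUnit d) :
    ¬ Irreducible (C a * X ^ 2 + C b * X + C c) ↔ ∃ s, discrim a b c = s ^ 2 := by
  let K := FractionRing R
  have hinj : Function.Injective (algebraMap R K) := IsFractionRing.injective R K
  have : NeZero (2 : K) := map_ofNat (algebraMap R K) 2 ▸ NeZero.of_injective hinj
  rw [(isPrimitive_quadratic hgcd).irreducible_iff_irreducible_map_fraction_map (K := K)]
  simp only [Polynomial.map_add, Polynomial.map_mul, Polynomial.map_pow, map_C, map_X]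
  rw [not_irreducible_quadratic_iff ((map_ne_zero_iff _ hinj).2 ha), ← map_discrim]
  constructor
  · rintro ⟨t, ht⟩
    exact IsIntegrallyClosed.exists_eq_sq_of_algebraMap_eq_sq ht
  · rintro ⟨s, hs⟩
    exact ⟨algebraMap R K s, by rw [hs, map_pow]⟩

/-- Let `Φ = a·y² + b·y + c` with `a, b, c ∈ ℂ[x₁,…,xₙ]`, `gcd(a,b,c) = 1` and `a ≠ 0`.
Then `Φ` is reducible iff `b² - 4ac` is a square in `ℂ[x₁,…,xₙ]`. -/
theorem stmt_10 (n : ℕ) (a b c : MvPolynomial (Fin n) ℂ) (ha : a ≠ 0)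
    (hgcd : ∀ d : MvPolynomial (Fin n) ℂ, d ∣ a → d ∣ b → d ∣ c → IsUnit d) :
    ¬ Irreducible (C a * X ^ 2 + C b * X + C c) ↔
      ∃ s : MvPolynomial (Fin n) ℂ, b ^ 2 - 4 * a * c = s ^ 2 :=
  not_irreducible_quadratic_iff_of_isGCDMonoid ha hgcd
end

section
/- The stabilizer of f(x,y) = (x^2+y, y^2+x) under the action (L,R)·f = L ∘ f ∘ R of pairs of affine automorphisms of C^2 has exactly 6 elements. Equivalently: the pairs (L,R) of affine maps of C^2 with L ∘ f ∘ R = f are exactly the 6 pairs determined by R ∈ {(x,y), (εx, ε^2 y), (ε^2 x, ε y), (y,x), (εy, ε^2 x), (ε^2 y, ε x)} with ε a primitive cube root of unity (each with the corresponding L). -/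
/-- An affine automorphism of `ℂ²`. -/
structure Aff where
  m11 : ℂ
  m12 : ℂ
  m21 : ℂ
  m22 : ℂ
  t1 : ℂ
  t2 : ℂ
  inv : m11 * m22 - m12 * m21 ≠ 0

/-- The underlying map of an affine automorphism. -/
def Aff.toFun (A : Aff) (p : ℂ × ℂ) : ℂ × ℂ :=
  (A.m11 * p.1 + A.m12 * p.2 + A.t1, A.m21 * p.1 + A.m22 * p.2 + A.t2)

noncomputable def om : ℂ := -1/2 + (Real.sqrt 3 / 2) * Complex.I
lemma hom : om^2 + om + 1 = 0 := by
  have h3 : ((Real.sqrt 3 : ℝ) : ℂ)^2 = 3 := by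
    rw [← Complex.ofReal_pow, Real.sq_sqrt (by norm_num : (3:ℝ) ≥ 0)]; norm_num
  unfold om
  linear_combination (Complex.I^2/4) * h3 + (3/4) * Complex.I_sq
lemma om_cube : om^3 = 1 := by linear_combination (om - 1) * hom
lemma cube_cases {ε : ℂ} (h : ε^3 = 1) : ε = 1 ∨ ε = om ∨ ε = om^2 := by
  have : (ε - 1) * (ε - om) * (ε - om^2) = 0 := by
    linear_combination h + (-ε^2 + ε + (ε-1)*(om-1)) * hom
  rcases mul_eq_zero.1 this with h' | h'
  · rcases mul_eq_zero.1 h' with h'' | h''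
    · exact Or.inl (by linear_combination h'')
    · exact Or.inr (Or.inl (by linear_combination h''))
  · exact Or.inr (Or.inr (by linear_combination h'))
lemma om_ne_zero : om ≠ 0 := by
  intro h; have : (1:ℂ) = 0 := by linear_combination hom - (om + 1) * h
  norm_num at this
lemma om_sq_ne_one : om^2 ≠ 1 := by
  intro h
  have h2 : om + 2 = 0 := by linear_combination hom - h
  have : (3:ℂ) = 0 := by linear_combination h - (om - 2) * h2
  norm_num at this
lemma om_ne_one : om ≠ 1 := by
  intro h; have : (3:ℂ) = 0 := by linear_combination hom - (om + 2) * h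
  norm_num at this
lemma om_ne_om_sq : om ≠ om^2 := by
  intro h
  have h1 : om^2 = 1 := by linear_combination om * h + om_cube
  exact om_sq_ne_one h1
lemma om_sq_ne_zero : om^2 ≠ 0 := pow_ne_zero 2 om_ne_zero
lemma key (L R : Aff) :
    (∀ p : ℂ × ℂ,
      L.toFun (((R.toFun p).1 ^ 2 + (R.toFun p).2, (R.toFun p).2 ^ 2 + (R.toFun p).1))
        = (p.1 ^ 2 + p.2, p.2 ^ 2 + p.1)) ↔
      ∃ ε : ℂ, ε ^ 3 = 1 ∧
        (((∀ p : ℂ × ℂ, R.toFun p = (ε * p.1, ε ^ 2 * p.2)) ∧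
          (∀ q : ℂ × ℂ, L.toFun q = (ε * q.1, ε ^ 2 * q.2))) ∨
         ((∀ p : ℂ × ℂ, R.toFun p = (ε * p.2, ε ^ 2 * p.1)) ∧
          (∀ q : ℂ × ℂ, L.toFun q = (ε ^ 2 * q.2, ε * q.1)))) := by
  obtain ⟨a, b, c, d, s, t, hL⟩ := L
  obtain ⟨A, B, C, D, E, F, hR⟩ := R
  constructor
  · intro h
    have h1 : ∀ x y : ℂ,
        a * ((A*x+B*y+E)^2 + (C*x+D*y+F)) + b * ((C*x+D*y+F)^2 + (A*x+B*y+E)) + s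
          = x^2 + y := by
      intro x y
      have := congrArg Prod.fst (h (x, y))
      simp only [Aff.toFun] at this
      linear_combination this
    have h2 : ∀ x y : ℂ,
        c * ((A*x+B*y+E)^2 + (C*x+D*y+F)) + d * ((C*x+D*y+F)^2 + (A*x+B*y+E)) + t
          = y^2 + x := by
      intro x y
      have := congrArg Prod.snd (h (x, y))
      simp only [Aff.toFun] at this
      linear_combination this
    have cxx : a*A^2 + b*C^2 = 1 := by
      linear_combination (h1 1 0 + h1 (-1) 0 - 2 * h1 0 0) / 2
    have cyy : a*B^2 + b*D^2 = 0 := by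
      linear_combination (h1 0 1 + h1 0 (-1) - 2 * h1 0 0) / 2
    have cxy : a*A*B + b*C*D = 0 := by
      linear_combination (h1 1 1 - h1 1 0 - h1 0 1 + h1 0 0) / 2
    have cx : 2*a*A*E + a*C + 2*b*C*F + b*A = 0 := by
      linear_combination (h1 1 0 - h1 (-1) 0) / 2
    have cy : 2*a*B*E + a*D + 2*b*D*F + b*B = 1 := by
      linear_combination (h1 0 1 - h1 0 (-1)) / 2
    have c0 : a*(E^2+F) + b*(F^2+E) + s = 0 := by linear_combination h1 0 0
    have dxx : c*A^2 + d*C^2 = 0 := by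
      linear_combination (h2 1 0 + h2 (-1) 0 - 2 * h2 0 0) / 2
    have dyy : c*B^2 + d*D^2 = 1 := by
      linear_combination (h2 0 1 + h2 0 (-1) - 2 * h2 0 0) / 2
    have dxy : c*A*B + d*C*D = 0 := by
      linear_combination (h2 1 1 - h2 1 0 - h2 0 1 + h2 0 0) / 2
    have dx : 2*c*A*E + c*C + 2*d*C*F + d*A = 1 := by
      linear_combination (h2 1 0 - h2 (-1) 0) / 2
    have dy : 2*c*B*E + c*D + 2*d*D*F + d*B = 0 := by
      linear_combination (h2 0 1 - h2 0 (-1)) / 2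
    have d0 : c*(E^2+F) + d*(F^2+E) + t = 0 := by linear_combination h2 0 0
    have hAB : A * B = 0 := by
      have h0 : (a*d - b*c) * (A*B) = 0 := by linear_combination d * cxy - b * dxy
      exact (mul_eq_zero.1 h0).resolve_left hL
    have hCD : C * D = 0 := by
      have h0 : (a*d - b*c) * (C*D) = 0 := by linear_combination a * dxy - c * cxy
      exact (mul_eq_zero.1 h0).resolve_left hL
    rcases mul_eq_zero.1 hAB with hA0 | hB0 <;> rcases mul_eq_zero.1 hCD with hC0 | hD0
    · -- A = 0, C = 0 : contradiction with invertibility of R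
      exact absurd (by rw [hA0, hC0]; ring) hR
    · -- A = 0, D = 0 : antidiagonal case
      subst hA0 hD0
      have hbC2 : b*C^2 = 1 := by linear_combination cxx
      have hb : b ≠ 0 := by
        intro h0
        have : (1:ℂ) = 0 := by linear_combination C^2 * h0 - hbC2
        norm_num at this
      have hC : C ≠ 0 := by
        intro h0
        have : (1:ℂ) = 0 := by linear_combination b*C*h0 - hbC2
        norm_num at this
      have hcB2 : c*B^2 = 1 := by linear_combination dyy
      have hc : c ≠ 0 := by
        intro h0
        have : (1:ℂ) = 0 := by linear_combination B^2 * h0 - hcB2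
        norm_num at this
      have hB : B ≠ 0 := by
        intro h0
        have : (1:ℂ) = 0 := by linear_combination c*B*h0 - hcB2
        norm_num at this
      have ha0 : a = 0 := by
        have h5 : a * B^2 = 0 := by linear_combination cyy
        exact (mul_eq_zero.1 h5).resolve_right (pow_ne_zero 2 hB)
      have hd0 : d = 0 := by
        have h5 : d * C^2 = 0 := by linear_combination dxx
        exact (mul_eq_zero.1 h5).resolve_right (pow_ne_zero 2 hC)
      subst ha0 hd0
      have hF0 : F = 0 := by
        have h5 : (b*C) * F = 0 := by linear_combination cx / 2
        exact (mul_eq_zero.1 h5).resolve_left (mul_ne_zero hb hC)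
      have hbB : b*B = 1 := by linear_combination cy
      have hcC : c*C = 1 := by linear_combination dx
      have hE0 : E = 0 := by
        have h5 : (c*B) * E = 0 := by linear_combination dy / 2
        exact (mul_eq_zero.1 h5).resolve_left (mul_ne_zero hc hB)
      subst hF0 hE0
      have hs0 : s = 0 := by linear_combination c0
      have ht0 : t = 0 := by linear_combination d0
      subst hs0 ht0
      have hCB2 : C = B^2 := mul_left_cancel₀ hc (by linear_combination hcC - hcB2)
      have hB4 : B^4 = B := by
        apply mul_left_cancel₀ hb
        linear_combination hbC2 - hbB - b*(C+B^2)*hCB2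
      have hB3 : B^3 = 1 := by
        have h7 : B * (B^3 - 1) = 0 := by linear_combination hB4
        have := (mul_eq_zero.1 h7).resolve_left hB
        linear_combination this
      have hb_eq : b = B^2 := mul_right_cancel₀ hB (by linear_combination hbB - hB3)
      have hc_eq : c = B := mul_right_cancel₀ (pow_ne_zero 2 hB) (by linear_combination hcB2 - hB3)
      refine ⟨B, hB3, Or.inr ⟨fun p => ?_, fun q => ?_⟩⟩
      · simp only [Aff.toFun, Prod.mk.injEq]
        constructor
        · ring
        · linear_combination p.1 * hCB2
      · simp only [Aff.toFun, Prod.mk.injEq]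
        constructor
        · linear_combination q.2 * hb_eq
        · linear_combination q.1 * hc_eq
    · -- B = 0, C = 0 : diagonal case
      subst hB0 hC0
      have haA2 : a*A^2 = 1 := by linear_combination cxx
      have ha : a ≠ 0 := by
        intro h0
        have : (1:ℂ) = 0 := by linear_combination A^2 * h0 - haA2
        norm_num at this
      have hA : A ≠ 0 := by
        intro h0
        have : (1:ℂ) = 0 := by linear_combination a*A*h0 - haA2
        norm_num at this
      have hdD2 : d*D^2 = 1 := by linear_combination dyy
      have hd : d ≠ 0 := by
        intro h0
        have : (1:ℂ) = 0 := by linear_combination D^2 * h0 - hdD2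
        norm_num at this
      have hD : D ≠ 0 := by
        intro h0
        have : (1:ℂ) = 0 := by linear_combination d*D*h0 - hdD2
        norm_num at this
      have hc0 : c = 0 := by
        have h5 : c * A^2 = 0 := by linear_combination dxx
        exact (mul_eq_zero.1 h5).resolve_right (pow_ne_zero 2 hA)
      have hb0 : b = 0 := by
        have h5 : b * D^2 = 0 := by linear_combination cyy
        exact (mul_eq_zero.1 h5).resolve_right (pow_ne_zero 2 hD)
      subst hc0 hb0
      have hE0 : E = 0 := by
        have h5 : (a*A) * E = 0 := by linear_combination cx / 2
        exact (mul_eq_zero.1 h5).resolve_left (mul_ne_zero ha hA)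
      have haD : a*D = 1 := by linear_combination cy
      have hdA : d*A = 1 := by linear_combination dx
      have hF0 : F = 0 := by
        have h5 : (d*D) * F = 0 := by linear_combination dy / 2
        exact (mul_eq_zero.1 h5).resolve_left (mul_ne_zero hd hD)
      subst hE0 hF0
      have hs0 : s = 0 := by linear_combination c0
      have ht0 : t = 0 := by linear_combination d0
      subst hs0 ht0
      have hDA2 : D = A^2 := mul_left_cancel₀ ha (by linear_combination haD - haA2)
      have hA4 : A^4 = A := by
        apply mul_left_cancel₀ hd
        linear_combination hdD2 - hdA - d*(D+A^2)*hDA2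
      have hA3 : A^3 = 1 := by
        have h7 : A * (A^3 - 1) = 0 := by linear_combination hA4
        have := (mul_eq_zero.1 h7).resolve_left hA
        linear_combination this
      have ha_eq : a = A := mul_right_cancel₀ (pow_ne_zero 2 hA) (by linear_combination haA2 - hA3)
      have hd_eq : d = A^2 := mul_right_cancel₀ hA (by linear_combination hdA - hA3)
      refine ⟨A, hA3, Or.inl ⟨fun p => ?_, fun q => ?_⟩⟩
      · simp only [Aff.toFun, Prod.mk.injEq]
        constructor
        · ring
        · linear_combination p.2 * hDA2
      · simp only [Aff.toFun, Prod.mk.injEq]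
        constructor
        · linear_combination q.1 * ha_eq
        · linear_combination q.2 * hd_eq
    · -- B = 0, D = 0 : contradiction
      exact absurd (by rw [hB0, hD0]; ring) hR
  · rintro ⟨ε, hε, hcase | hcase⟩ <;> obtain ⟨hRf, hLf⟩ := hcase <;> intro p <;>
      rw [hRf p] <;> rw [hLf] <;> simp only [Prod.mk.injEq] <;> constructor
    · linear_combination (p.1^2 + p.2) * hε
    · linear_combination ((ε^3 + 1) * p.2^2 + p.1) * hε
    · linear_combination ((ε^3 + 1) * p.1^2 + p.2) * hε
    · linear_combination (p.2^2 + p.1) * hε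
lemma Aff.ext' {P Q : Aff} (h1 : P.m11 = Q.m11) (h2 : P.m12 = Q.m12)
    (h3 : P.m21 = Q.m21) (h4 : P.m22 = Q.m22) (h5 : P.t1 = Q.t1) (h6 : P.t2 = Q.t2) :
    P = Q := by
  cases P; cases Q
  dsimp at h1 h2 h3 h4 h5 h6
  subst h1 h2 h3 h4 h5 h6
  rfl

noncomputable def dAff (ε : ℂ) (h : ε ^ 3 = 1) : Aff :=
  ⟨ε, 0, 0, ε^2, 0, 0, by
    have : ε * ε^2 - 0 * 0 = 1 := by linear_combination h
    rw [this]; exact one_ne_zero⟩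

noncomputable def xR (ε : ℂ) (h : ε ^ 3 = 1) : Aff :=
  ⟨0, ε, ε^2, 0, 0, 0, by
    have : (0:ℂ) * 0 - ε * ε^2 = -1 := by linear_combination -h
    rw [this]; exact neg_ne_zero.2 one_ne_zero⟩

noncomputable def xL (ε : ℂ) (h : ε ^ 3 = 1) : Aff :=
  ⟨0, ε^2, ε, 0, 0, 0, by
    have : (0:ℂ) * 0 - ε^2 * ε = -1 := by linear_combination -h
    rw [this]; exact neg_ne_zero.2 one_ne_zero⟩

lemma dAff_toFun (ε : ℂ) (h : ε ^ 3 = 1) (p : ℂ × ℂ) :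
    (dAff ε h).toFun p = (ε * p.1, ε ^ 2 * p.2) := by
  simp only [dAff, Aff.toFun, Prod.mk.injEq]; constructor <;> ring

lemma xR_toFun (ε : ℂ) (h : ε ^ 3 = 1) (p : ℂ × ℂ) :
    (xR ε h).toFun p = (ε * p.2, ε ^ 2 * p.1) := by
  simp only [xR, Aff.toFun, Prod.mk.injEq]; constructor <;> ring

lemma xL_toFun (ε : ℂ) (h : ε ^ 3 = 1) (q : ℂ × ℂ) :
    (xL ε h).toFun q = (ε ^ 2 * q.2, ε * q.1) := by
  simp only [xL, Aff.toFun, Prod.mk.injEq]; constructor <;> ring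

lemma eq_dAff {R : Aff} {ε : ℂ} (h3 : ε ^ 3 = 1)
    (h : ∀ p : ℂ × ℂ, R.toFun p = (ε * p.1, ε ^ 2 * p.2)) : R = dAff ε h3 := by
  have e0 := h (0, 0); have e1 := h (1, 0); have e2 := h (0, 1)
  simp only [Aff.toFun, Prod.mk.injEq] at e0 e1 e2
  refine Aff.ext'
    (show _ = (ε : ℂ) from ?_)
    (show _ = (0 : ℂ) from ?_)
    (show _ = (0 : ℂ) from ?_)
    (show _ = (ε^2 : ℂ) from ?_)
    (show _ = (0 : ℂ) from ?_)
    (show _ = (0 : ℂ) from ?_)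
  · linear_combination e1.1 - e0.1
  · linear_combination e2.1 - e0.1
  · linear_combination e1.2 - e0.2
  · linear_combination e2.2 - e0.2
  · linear_combination e0.1
  · linear_combination e0.2

lemma eq_xR {R : Aff} {ε : ℂ} (h3 : ε ^ 3 = 1)
    (h : ∀ p : ℂ × ℂ, R.toFun p = (ε * p.2, ε ^ 2 * p.1)) : R = xR ε h3 := by
  have e0 := h (0, 0); have e1 := h (1, 0); have e2 := h (0, 1)
  simp only [Aff.toFun, Prod.mk.injEq] at e0 e1 e2
  refine Aff.ext'
    (show _ = (0 : ℂ) from ?_)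
    (show _ = (ε : ℂ) from ?_)
    (show _ = (ε^2 : ℂ) from ?_)
    (show _ = (0 : ℂ) from ?_)
    (show _ = (0 : ℂ) from ?_)
    (show _ = (0 : ℂ) from ?_)
  · linear_combination e1.1 - e0.1
  · linear_combination e2.1 - e0.1
  · linear_combination e1.2 - e0.2
  · linear_combination e2.2 - e0.2
  · linear_combination e0.1
  · linear_combination e0.2

lemma eq_xL {R : Aff} {ε : ℂ} (h3 : ε ^ 3 = 1)
    (h : ∀ q : ℂ × ℂ, R.toFun q = (ε ^ 2 * q.2, ε * q.1)) : R = xL ε h3 := by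
  have e0 := h (0, 0); have e1 := h (1, 0); have e2 := h (0, 1)
  simp only [Aff.toFun, Prod.mk.injEq] at e0 e1 e2
  refine Aff.ext'
    (show _ = (0 : ℂ) from ?_)
    (show _ = (ε^2 : ℂ) from ?_)
    (show _ = (ε : ℂ) from ?_)
    (show _ = (0 : ℂ) from ?_)
    (show _ = (0 : ℂ) from ?_)
    (show _ = (0 : ℂ) from ?_)
  · linear_combination e1.1 - e0.1
  · linear_combination e2.1 - e0.1
  · linear_combination e1.2 - e0.2
  · linear_combination e2.2 - e0.2
  · linear_combination e0.1
  · linear_combination e0.2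

lemma om2_cube : (om^2)^3 = 1 := by linear_combination (om^3 + 1) * om_cube

noncomputable abbrev P1 : Aff × Aff := (dAff 1 (one_pow 3), dAff 1 (one_pow 3))
noncomputable abbrev P2 : Aff × Aff := (dAff om om_cube, dAff om om_cube)
noncomputable abbrev P3 : Aff × Aff := (dAff (om^2) om2_cube, dAff (om^2) om2_cube)
noncomputable abbrev P4 : Aff × Aff := (xL 1 (one_pow 3), xR 1 (one_pow 3))
noncomputable abbrev P5 : Aff × Aff := (xL om om_cube, xR om om_cube)
noncomputable abbrev P6 : Aff × Aff := (xL (om^2) om2_cube, xR (om^2) om2_cube)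

/-- The stabilizer of `f(x,y) = (x²+y, y²+x)` under `(L,R)·f = L ∘ f ∘ R` has exactly
6 elements: the pairs `(L,R)` with `L ∘ f ∘ R = f` are exactly those determined by
`R ∈ {(x,y), (εx,ε²y), (ε²x,εy), (y,x), (εy,ε²x), (ε²y,εx)}`, `ε³ = 1`, each with the
corresponding `L`. -/
theorem stmt_11 :
    {LR : Aff × Aff | ∀ p : ℂ × ℂ,
        LR.1.toFun (((LR.2.toFun p).1 ^ 2 + (LR.2.toFun p).2,
          (LR.2.toFun p).2 ^ 2 + (LR.2.toFun p).1)) = (p.1 ^ 2 + p.2, p.2 ^ 2 + p.1)}.ncard = 6 ∧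
      ∀ L R : Aff,
        (∀ p : ℂ × ℂ,
          L.toFun (((R.toFun p).1 ^ 2 + (R.toFun p).2, (R.toFun p).2 ^ 2 + (R.toFun p).1))
            = (p.1 ^ 2 + p.2, p.2 ^ 2 + p.1)) ↔
          ∃ ε : ℂ, ε ^ 3 = 1 ∧
            (((∀ p : ℂ × ℂ, R.toFun p = (ε * p.1, ε ^ 2 * p.2)) ∧
              (∀ q : ℂ × ℂ, L.toFun q = (ε * q.1, ε ^ 2 * q.2))) ∨
             ((∀ p : ℂ × ℂ, R.toFun p = (ε * p.2, ε ^ 2 * p.1)) ∧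
              (∀ q : ℂ × ℂ, L.toFun q = (ε ^ 2 * q.2, ε * q.1)))) := by
  refine ⟨?_, key⟩
  have hset : {LR : Aff × Aff | ∀ p : ℂ × ℂ,
        LR.1.toFun (((LR.2.toFun p).1 ^ 2 + (LR.2.toFun p).2,
          (LR.2.toFun p).2 ^ 2 + (LR.2.toFun p).1)) = (p.1 ^ 2 + p.2, p.2 ^ 2 + p.1)}
      = ({P1, P2, P3, P4, P5, P6} : Set (Aff × Aff)) := by
    ext LR
    simp only [Set.mem_setOf_eq, Set.mem_insert_iff, Set.mem_singleton_iff]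
    rw [key LR.1 LR.2]
    constructor
    · rintro ⟨ε, hε, hc⟩
      rcases cube_cases hε with rfl | rfl | rfl <;>
        rcases hc with ⟨hRf, hLf⟩ | ⟨hRf, hLf⟩
      · exact Or.inl (Prod.ext_iff.mpr ⟨eq_dAff (one_pow 3) hLf, eq_dAff (one_pow 3) hRf⟩)
      · exact Or.inr (Or.inr (Or.inr (Or.inl
          (Prod.ext_iff.mpr ⟨eq_xL (one_pow 3) hLf, eq_xR (one_pow 3) hRf⟩))))
      · exact Or.inr (Or.inl (Prod.ext_iff.mpr ⟨eq_dAff om_cube hLf, eq_dAff om_cube hRf⟩))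
      · exact Or.inr (Or.inr (Or.inr (Or.inr (Or.inl
          (Prod.ext_iff.mpr ⟨eq_xL om_cube hLf, eq_xR om_cube hRf⟩)))))
      · exact Or.inr (Or.inr (Or.inl
          (Prod.ext_iff.mpr ⟨eq_dAff om2_cube hLf, eq_dAff om2_cube hRf⟩)))
      · exact Or.inr (Or.inr (Or.inr (Or.inr (Or.inr
          (Prod.ext_iff.mpr ⟨eq_xL om2_cube hLf, eq_xR om2_cube hRf⟩)))))
    · rintro (h | h | h | h | h | h) <;> rw [h]
      · exact ⟨1, one_pow 3, Or.inl ⟨dAff_toFun 1 (one_pow 3), dAff_toFun 1 (one_pow 3)⟩⟩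
      · exact ⟨om, om_cube, Or.inl ⟨dAff_toFun om om_cube, dAff_toFun om om_cube⟩⟩
      · exact ⟨om^2, om2_cube, Or.inl ⟨dAff_toFun (om^2) om2_cube, dAff_toFun (om^2) om2_cube⟩⟩
      · exact ⟨1, one_pow 3, Or.inr ⟨xR_toFun 1 (one_pow 3), xL_toFun 1 (one_pow 3)⟩⟩
      · exact ⟨om, om_cube, Or.inr ⟨xR_toFun om om_cube, xL_toFun om om_cube⟩⟩
      · exact ⟨om^2, om2_cube, Or.inr ⟨xR_toFun (om^2) om2_cube, xL_toFun (om^2) om2_cube⟩⟩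
  rw [hset]
  have n1 : P1 ∉ ({P2, P3, P4, P5, P6} : Set (Aff × Aff)) := by
    simp only [Set.mem_insert_iff, Set.mem_singleton_iff]
    rintro (h | h | h | h | h)
    · exact om_ne_one (congrArg (fun z => Aff.m11 z.2) h).symm
    · exact om_sq_ne_one (congrArg (fun z => Aff.m11 z.2) h).symm
    · exact one_ne_zero (congrArg (fun z => Aff.m11 z.2) h)
    · exact one_ne_zero (congrArg (fun z => Aff.m11 z.2) h)
    · exact one_ne_zero (congrArg (fun z => Aff.m11 z.2) h)
  have n2 : P2 ∉ ({P3, P4, P5, P6} : Set (Aff × Aff)) := by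
    simp only [Set.mem_insert_iff, Set.mem_singleton_iff]
    rintro (h | h | h | h)
    · exact om_ne_om_sq (congrArg (fun z => Aff.m11 z.2) h)
    · exact om_ne_zero (congrArg (fun z => Aff.m11 z.2) h)
    · exact om_ne_zero (congrArg (fun z => Aff.m11 z.2) h)
    · exact om_ne_zero (congrArg (fun z => Aff.m11 z.2) h)
  have n3 : P3 ∉ ({P4, P5, P6} : Set (Aff × Aff)) := by
    simp only [Set.mem_insert_iff, Set.mem_singleton_iff]
    rintro (h | h | h)
    · exact om_sq_ne_zero (congrArg (fun z => Aff.m11 z.2) h)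
    · exact om_sq_ne_zero (congrArg (fun z => Aff.m11 z.2) h)
    · exact om_sq_ne_zero (congrArg (fun z => Aff.m11 z.2) h)
  have n4 : P4 ∉ ({P5, P6} : Set (Aff × Aff)) := by
    simp only [Set.mem_insert_iff, Set.mem_singleton_iff]
    rintro (h | h)
    · exact om_ne_one (congrArg (fun z => Aff.m12 z.2) h).symm
    · exact om_sq_ne_one (congrArg (fun z => Aff.m12 z.2) h).symm
  have n5 : P5 ∉ ({P6} : Set (Aff × Aff)) := by
    simp only [Set.mem_singleton_iff]
    intro h
    exact om_ne_om_sq (congrArg (fun z => Aff.m12 z.2) h)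
  rw [Set.ncard_insert_of_notMem n1 (Set.toFinite _),
    Set.ncard_insert_of_notMem n2 (Set.toFinite _),
    Set.ncard_insert_of_notMem n3 (Set.toFinite _),
    Set.ncard_insert_of_notMem n4 (Set.toFinite _),
    Set.ncard_insert_of_notMem n5 (Set.toFinite _),
    Set.ncard_singleton]
end

section
/- Every affine automorphism R of C^2 that maps the hyperbola {4xy = 1} to itself and fixes the set of three points {(-ε/2, -ε^2/2) : ε^3 = 1} is one of the six linear maps (x,y) |-> (x,y), (εx, ε^2 y), (ε^2 x, ε y), (y,x), (εy, ε^2 x), (ε^2 y, ε x), where ε ranges over cube roots of unity. -/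
open Polynomial in
theorem eq_zero_of_forall_ne_zero_sum_mul_pow_eq_zero {K : Type*} [Field K] [Infinite K] {n : ℕ}
    (e : Fin n → K) (h : ∀ u : K, u ≠ 0 → ∑ i, e i * u ^ (i : ℕ) = 0) (i : Fin n) :
    e i = 0 := by
  set p : K[X] := ∑ i, C (e i) * X ^ (i : ℕ)
  have hroots : {u | p.IsRoot u}.Infinite :=
    (Set.finite_singleton (0 : K)).infinite_compl.mono fun u hu => by
      simpa [p, eval_finsetSum] using h u hu
  have hcoeff : p.coeff i = e i := by
    simp [p, finsetSum_coeff, Fin.val_inj]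
  rw [← hcoeff, eq_zero_of_infinite_isRoot p hroots, coeff_zero]

def hyperbola : Set (ℂ × ℂ) := {p | 4 * p.1 * p.2 = 1}

theorem Aff.coeff_relations_of_mapsTo_hyperbola (R : Aff)
    (h : Set.MapsTo R.toFun hyperbola hyperbola) :
    R.m11 * R.m21 = 0 ∧ R.m12 * R.m22 = 0 ∧ R.m11 * R.t2 + R.m21 * R.t1 = 0 ∧
      R.m12 * R.t2 + R.m22 * R.t1 = 0 := by
  cases R with | mk a b c d s t _ => ?_
  have hpoly : ∀ u : ℂ, u ≠ 0 →
      (4 * a * u ^ 2 + 4 * s * u + b) * (4 * c * u ^ 2 + 4 * t * u + d) = 4 * u ^ 2 := by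
    intro u hu
    have hu' : (u, 1 / (4 * u)) ∈ hyperbola := by
      simp only [hyperbola, Set.mem_ofPred_eq]
      field_simp
    have himage := h hu'
    simp only [hyperbola, Aff.toFun, Set.mem_ofPred_eq] at himage
    field_simp at himage
    linear_combination himage
  have hcoeffs := eq_zero_of_forall_ne_zero_sum_mul_pow_eq_zero
    ![b * d, 4 * (s * d + t * b), 4 * (a * d + b * c) + 16 * s * t - 4, 16 * (a * t + c * s),
      16 * (a * c)] fun u hu => by
    simp only [Fin.sum_univ_five]
    simp
    linear_combination hpoly u hu
  have h0 : b * d = 0 := hcoeffs 0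
  have h1 : 4 * (s * d + t * b) = 0 := hcoeffs 1
  have h3 : 16 * (a * t + c * s) = 0 := hcoeffs 3
  have h4 : 16 * (a * c) = 0 := hcoeffs 4
  exact ⟨by linear_combination h4 / 16, h0, by linear_combination h3 / 16,
    by linear_combination h1 / 4⟩

theorem Aff.linear_diag_or_antidiag_of_mapsTo_hyperbola (R : Aff)
    (h : Set.MapsTo R.toFun hyperbola hyperbola) :
    (∀ p : ℂ × ℂ, R.toFun p = (R.m11 * p.1, R.m22 * p.2)) ∨
      (∀ p : ℂ × ℂ, R.toFun p = (R.m12 * p.2, R.m21 * p.1)) := by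
  obtain ⟨hac, hbd, hts, hts'⟩ := R.coeff_relations_of_mapsTo_hyperbola h
  cases R with | mk a b c d s t hdet => ?_
  dsimp only at hac hbd hts hts'
  -- `(t, s)` lies in the kernel of the invertible matrix `[[a, c], [b, d]]`
  have hs : s = 0 := by
    refine (mul_eq_zero.1 (?_ : s * (a * d - b * c) = 0)).resolve_right hdet
    linear_combination a * hts' - b * hts
  have ht : t = 0 := by
    refine (mul_eq_zero.1 (?_ : t * (a * d - b * c) = 0)).resolve_right hdet
    linear_combination d * hts - c * hts'
  subst hs ht
  rcases mul_eq_zero.1 hac with rfl | rfl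
  · have hb : b ≠ 0 := fun hb => hdet (by simp [hb])
    obtain rfl : d = 0 := (mul_eq_zero.1 hbd).resolve_left hb
    exact Or.inr fun p => by simp [Aff.toFun]
  · have hd : d ≠ 0 := fun hd => hdet (by simp [hd])
    obtain rfl : b = 0 := (mul_eq_zero.1 hbd).resolve_right hd
    exact Or.inl fun p => by simp [Aff.toFun]

/-- Every affine automorphism of `ℂ²` preserving the hyperbola `{4xy = 1}` and the
three-point set `{(-ε/2, -ε²/2) : ε³ = 1}` is one of the six listed linear maps. -/
theorem stmt_12 (R : Aff)
    (h1 : R.toFun '' {p : ℂ × ℂ | 4 * p.1 * p.2 = 1} = {p : ℂ × ℂ | 4 * p.1 * p.2 = 1})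
    (h2 : R.toFun '' {q : ℂ × ℂ | ∃ ε : ℂ, ε ^ 3 = 1 ∧ q = (-ε / 2, -ε ^ 2 / 2)}
        = {q : ℂ × ℂ | ∃ ε : ℂ, ε ^ 3 = 1 ∧ q = (-ε / 2, -ε ^ 2 / 2)}) :
    ∃ ε : ℂ, ε ^ 3 = 1 ∧
      ((∀ p : ℂ × ℂ, R.toFun p = (ε * p.1, ε ^ 2 * p.2)) ∨
       (∀ p : ℂ × ℂ, R.toFun p = (ε * p.2, ε ^ 2 * p.1))) := by
  obtain ⟨ε, hε, himage⟩ :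
      ∃ ε : ℂ, ε ^ 3 = 1 ∧ R.toFun (-1 / 2, -1 / 2) = (-ε / 2, -ε ^ 2 / 2) :=
    h2.subset (Set.mem_image_of_mem _ ⟨1, by norm_num, by norm_num⟩)
  refine ⟨ε, hε, ?_⟩
  rcases R.linear_diag_or_antidiag_of_mapsTo_hyperbola (Set.mapsTo_iff_image_subset.2 h1.subset)
    with hR | hR <;> rw [hR, Prod.mk.injEq] at himage <;> obtain ⟨hx, hy⟩ := himage
  · have ha : R.m11 = ε := by linear_combination -2 * hx
    have hd : R.m22 = ε ^ 2 := by linear_combination -2 * hy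
    exact Or.inl fun p => by rw [hR, ha, hd]
  · have hb : R.m12 = ε := by linear_combination -2 * hx
    have hc : R.m21 = ε ^ 2 := by linear_combination -2 * hy
    exact Or.inr fun p => by rw [hR, hb, hc]
end

section
/- Let f = (g_2 + g_1 + g_0, h_1 + h_0) : C^2 -> C^2 where g_i, h_i are homogeneous of degree i, g_2 ≠ 0 is not a square of a linear form, and the linear form h_1 ≠ 0 does not divide g_2. Then f is linearly equivalent to (x,y) |-> (xy, x+y): there exist affine automorphisms L, R of C^2 with f = L ∘ (xy, x+y) ∘ R. -/
/-!
Since `g₂` is not a square, its discriminant is nonzero and `g₂ = u v` for two independent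
linear forms `u, v`. Writing `h₁ = p u + q v` and `g₁ = r u + w v`, the hypothesis that `h₁`
does not divide `g₂` gives `p, q ≠ 0`. Then `g = (u + w)(v + r) + g₀ - r w`, and with
`σ² = p q` the new coordinates `X = (p/σ)(u + w)`, `Y = (q/σ)(v + r)` satisfy `X Y = (u + w)(v + r)`
and `σ (X + Y) = h₁ + p w + q r`.
-/

section BinaryQuadraticForm

variable {K : Type*} [Field K]

theorem exists_sq_of_discrim_eq_zero [IsAlgClosed K] [NeZero (2 : K)] {a b c : K}
    (h : discrim a b c = 0) :
    ∃ s t : K, ∀ x y : K, a * x ^ 2 + b * x * y + c * y ^ 2 = (s * x + t * y) ^ 2 := by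
  rw [discrim] at h
  by_cases ha : a = 0
  · have hb : b = 0 := pow_eq_zero_iff two_ne_zero |>.mp (by linear_combination h + 4 * c * ha)
    obtain ⟨t, ht⟩ := IsAlgClosed.exists_pow_nat_eq c two_pos
    exact ⟨0, t, fun x y => by linear_combination x ^ 2 * ha + x * y * hb - y ^ 2 * ht⟩
  · obtain ⟨s, hs⟩ := IsAlgClosed.exists_pow_nat_eq a two_pos
    have hs0 : s ≠ 0 := by rintro rfl; exact ha (by rw [← hs]; ring)
    refine ⟨s, b / (2 * s), fun x y => ?_⟩
    field_simp
    linear_combination (-4 * s ^ 2 * x ^ 2 + 4 * c * y ^ 2) * hs - y ^ 2 * h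

/-- The determinant of the two factors squares to the discriminant, hence is nonzero. -/
theorem exists_independent_factors_of_discrim_ne_zero [IsAlgClosed K] [NeZero (2 : K)]
    {a b c : K} (h : discrim a b c ≠ 0) :
    ∃ α₁ β₁ α₂ β₂ : K, α₁ * α₂ = a ∧ α₁ * β₂ + α₂ * β₁ = b ∧ β₁ * β₂ = c ∧
      α₁ * β₂ - α₂ * β₁ ≠ 0 := by
  rw [discrim] at h
  by_cases ha : a = 0
  · subst ha
    have hb : b ≠ 0 := by rintro rfl; exact h (by ring)
    exact ⟨0, 1, b, c, by ring, by ring, by ring, by simpa using hb⟩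
  · obtain ⟨δ, hδ⟩ := IsAlgClosed.exists_pow_nat_eq (b ^ 2 - 4 * a * c) two_pos
    have hδ0 : δ ≠ 0 := by rintro rfl; exact h (by rw [← hδ]; ring)
    refine ⟨1, (b - δ) / (2 * a), a, (b + δ) / 2, by ring, ?_, ?_, ?_⟩
    · field_simp; ring
    · field_simp; linear_combination -hδ
    · have hdet : 1 * ((b + δ) / 2) - a * ((b - δ) / (2 * a)) = δ := by field_simp; ring
      rwa [hdet]

theorem exists_coords_of_det_ne_zero {α₁ β₁ α₂ β₂ : K} (hD : α₁ * β₂ - α₂ * β₁ ≠ 0) (d e : K) :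
    ∃ p q : K, d = p * α₁ + q * α₂ ∧ e = p * β₁ + q * β₂ :=
  ⟨(d * β₂ - e * α₂) / (α₁ * β₂ - α₂ * β₁), (e * α₁ - d * β₁) / (α₁ * β₂ - α₂ * β₁),
    by rw [div_mul_eq_mul_div, div_mul_eq_mul_div, ← add_div, eq_div_iff hD]; ring,
    by rw [div_mul_eq_mul_div, div_mul_eq_mul_div, ← add_div, eq_div_iff hD]; ring⟩

/-- Otherwise `h₁ = q v` would divide `g₂ = u v`. -/
theorem coord_ne_zero_of_not_dvd {a b c d e α₁ β₁ α₂ β₂ p q : K}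
    (hA : α₁ * α₂ = a) (hB : α₁ * β₂ + α₂ * β₁ = b) (hC : β₁ * β₂ = c)
    (hd : d = p * α₁ + q * α₂) (he : e = p * β₁ + q * β₂) (hh1 : ¬ (d = 0 ∧ e = 0))
    (hndvd : ¬ ∃ s t : K, ∀ x y : K,
        a * x ^ 2 + b * x * y + c * y ^ 2 = (d * x + e * y) * (s * x + t * y)) :
    p ≠ 0 := by
  rintro rfl
  have hq : q ≠ 0 := by rintro rfl; exact hh1 ⟨by simpa using hd, by simpa using he⟩
  refine hndvd ⟨α₁ / q, β₁ / q, fun x y => ?_⟩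
  rw [hd, he]
  field_simp
  linear_combination q * (-(x ^ 2) * hA - x * y * hB - y ^ 2 * hC)

end BinaryQuadraticForm

theorem exists_aff_normal_form {a b c p1 p2 g0 d e h0 α₁ β₁ α₂ β₂ p q r w : ℂ}
    (hA : α₁ * α₂ = a) (hB : α₁ * β₂ + α₂ * β₁ = b) (hC : β₁ * β₂ = c)
    (hD : α₁ * β₂ - α₂ * β₁ ≠ 0)
    (hd : d = p * α₁ + q * α₂) (he : e = p * β₁ + q * β₂)
    (hr : p1 = r * α₁ + w * α₂) (hw : p2 = r * β₁ + w * β₂) (hp : p ≠ 0) (hq : q ≠ 0) :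
    ∃ L R : Aff, ∀ q : ℂ × ℂ,
      (a * q.1 ^ 2 + b * q.1 * q.2 + c * q.2 ^ 2 + p1 * q.1 + p2 * q.2 + g0,
        d * q.1 + e * q.2 + h0)
      = L.toFun (((R.toFun q).1 * (R.toFun q).2, (R.toFun q).1 + (R.toFun q).2)) := by
  obtain ⟨σ, hσ⟩ := IsAlgClosed.exists_pow_nat_eq (p * q) two_pos
  have hσ0 : σ ≠ 0 := by rintro rfl; exact mul_ne_zero hp hq (by rw [← hσ]; ring)
  refine ⟨⟨1, 0, 0, σ, g0 - r * w, h0 - (p * w + q * r), by simpa using hσ0⟩,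
    ⟨p / σ * α₁, p / σ * β₁, q / σ * α₂, q / σ * β₂, p / σ * w, q / σ * r, ?_⟩, ?_⟩
  · have hdet : p / σ * α₁ * (q / σ * β₂) - p / σ * β₁ * (q / σ * α₂) = α₁ * β₂ - α₂ * β₁ := by
      field_simp; rw [hσ]
    rwa [hdet]
  · rintro ⟨x, y⟩
    simp only [Aff.toFun]
    refine Prod.ext ?_ ?_
    · field_simp
      rw [hσ, ← hA, ← hB, ← hC, hr, hw]
      ring
    · field_simp
      rw [hd, he]
      ring

theorem stmt_14_general (a b c p1 p2 g0 d e h0 : ℂ)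
    (hnsq : ¬ ∃ s t : ℂ, ∀ x y : ℂ, a * x ^ 2 + b * x * y + c * y ^ 2 = (s * x + t * y) ^ 2)
    (hh1 : ¬ (d = 0 ∧ e = 0))
    (hndvd : ¬ ∃ s t : ℂ, ∀ x y : ℂ,
        a * x ^ 2 + b * x * y + c * y ^ 2 = (d * x + e * y) * (s * x + t * y)) :
    ∃ L R : Aff, ∀ q : ℂ × ℂ,
      (a * q.1 ^ 2 + b * q.1 * q.2 + c * q.2 ^ 2 + p1 * q.1 + p2 * q.2 + g0,
        d * q.1 + e * q.2 + h0)
      = L.toFun (((R.toFun q).1 * (R.toFun q).2, (R.toFun q).1 + (R.toFun q).2)) := by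
  have hΔ : discrim a b c ≠ 0 := fun h => hnsq (exists_sq_of_discrim_eq_zero h)
  obtain ⟨α₁, β₁, α₂, β₂, hA, hB, hC, hD⟩ := exists_independent_factors_of_discrim_ne_zero hΔ
  obtain ⟨p, q, hd, he⟩ := exists_coords_of_det_ne_zero hD d e
  obtain ⟨r, w, hr, hw⟩ := exists_coords_of_det_ne_zero hD p1 p2
  have hp : p ≠ 0 := coord_ne_zero_of_not_dvd hA hB hC hd he hh1 hndvd
  have hq : q ≠ 0 := coord_ne_zero_of_not_dvd (α₁ := α₂) (β₁ := β₂) (α₂ := α₁) (β₂ := β₁)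
    (by rw [mul_comm, hA]) (by rw [add_comm, hB]) (by rw [mul_comm, hC])
    (by rw [add_comm, hd]) (by rw [add_comm, he]) hh1 hndvd
  exact exists_aff_normal_form hA hB hC hD hd he hr hw hp hq

/-- Let `f = (g₂ + g₁ + g₀, h₁ + h₀)` with `g₂ ≠ 0` not a square of a linear form and the
nonzero linear form `h₁` not dividing `g₂`. Then `f` is linearly equivalent to `(xy, x+y)`. -/
theorem stmt_14 (a b c p1 p2 g0 d e h0 : ℂ)
    (hg2 : ¬ (a = 0 ∧ b = 0 ∧ c = 0))
    (hnsq : ¬ ∃ s t : ℂ, ∀ x y : ℂ, a * x ^ 2 + b * x * y + c * y ^ 2 = (s * x + t * y) ^ 2)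
    (hh1 : ¬ (d = 0 ∧ e = 0))
    (hndvd : ¬ ∃ s t : ℂ, ∀ x y : ℂ,
        a * x ^ 2 + b * x * y + c * y ^ 2 = (d * x + e * y) * (s * x + t * y)) :
    ∃ L R : Aff, ∀ q : ℂ × ℂ,
      (a * q.1 ^ 2 + b * q.1 * q.2 + c * q.2 ^ 2 + p1 * q.1 + p2 * q.2 + g0,
        d * q.1 + e * q.2 + h0)
      = L.toFun (((R.toFun q).1 * (R.toFun q).2, (R.toFun q).1 + (R.toFun q).2)) :=
  stmt_14_general a b c p1 p2 g0 d e h0 hnsq hh1 hndvd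
end

section
/- Let f = (g_2 + g_1 + g_0, h_1 + h_0) : C^2 -> C^2 with g_2 a nonzero square of a linear form, h_1 ≠ 0 dividing g_2 but not dividing g_1. Then f is linearly equivalent to (x,y) |-> (x^2 + y, x); in particular f is a polynomial automorphism of C^2. -/
/-! The hypotheses force `g₂ = μ² h₁²` with `μ ≠ 0`, and `h₁` together with the linear part `p`
of `g₁` form a linear coordinate system. In the affine coordinates `u = h₁ + h₀` and
`v = (p + g₀) / μ² - 2 h₀ h₁ - h₀²` the map becomes `(μ² (u² + v), u)`. -/

section LinearForms

variable {K : Type*} [Field K]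

theorem exists_eq_mul_of_mul_eq_mul {s t d e : K} (hde : ¬ (d = 0 ∧ e = 0))
    (h : s * e = t * d) : ∃ μ : K, s = μ * d ∧ t = μ * e := by
  by_cases hd : d = 0
  · have he : e ≠ 0 := fun he => hde ⟨hd, he⟩
    have hs : s = 0 := by simpa [hd, he] using h
    exact ⟨t / e, by simp [hs, hd], by field_simp⟩
  · exact ⟨s / d, by field_simp, by field_simp; linear_combination -h⟩

theorem coeffs_eq_of_forall_eq_sq {a b c s t : K}
    (h : ∀ x y : K, a * x ^ 2 + b * x * y + c * y ^ 2 = (s * x + t * y) ^ 2) :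
    a = s ^ 2 ∧ b = 2 * s * t ∧ c = t ^ 2 :=
  ⟨by linear_combination h 1 0, by linear_combination h 1 1 - h 1 0 - h 0 1,
    by linear_combination h 0 1⟩

theorem exists_eq_mul_of_sq_eq_mul {s t d e s' t' : K} (hde : ¬ (d = 0 ∧ e = 0))
    (h : ∀ x y : K, (s * x + t * y) ^ 2 = (d * x + e * y) * (s' * x + t' * y)) :
    ∃ μ : K, s = μ * d ∧ t = μ * e := by
  have hsq : (s * e - t * d) ^ 2 = 0 := by linear_combination h e (-d)
  exact exists_eq_mul_of_mul_eq_mul hde (sub_eq_zero.mp (pow_eq_zero_iff two_ne_zero |>.mp hsq))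

end LinearForms

theorem Aff.bijective (A : Aff) : Function.Bijective A.toFun := by
  rw [Function.bijective_iff_has_inverse]
  have hdet := A.inv
  refine ⟨fun p => ((A.m22 * (p.1 - A.t1) - A.m12 * (p.2 - A.t2)) / (A.m11 * A.m22 - A.m12 * A.m21),
      (A.m11 * (p.2 - A.t2) - A.m21 * (p.1 - A.t1)) / (A.m11 * A.m22 - A.m12 * A.m21)), ?_, ?_⟩ <;>
    intro p <;> simp only [Aff.toFun, Prod.ext_iff] <;> constructor
  · linear_combination p.1 * mul_inv_cancel₀ hdet
  · linear_combination p.2 * mul_inv_cancel₀ hdet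
  · linear_combination (p.1 - A.t1) * mul_inv_cancel₀ hdet
  · linear_combination (p.2 - A.t2) * mul_inv_cancel₀ hdet

def quadShear (p : ℂ × ℂ) : ℂ × ℂ := (p.1 ^ 2 + p.2, p.1)

theorem quadShear_bijective : Function.Bijective quadShear := by
  rw [Function.bijective_iff_has_inverse]
  exact ⟨fun p => (p.2, p.1 - p.2 ^ 2), fun p => by simp [quadShear], fun p => by simp [quadShear]⟩

theorem bijective_of_eq_aff_comp_quadShear {f : ℂ × ℂ → ℂ × ℂ} {L R : Aff}
    (h : ∀ q, f q = L.toFun (quadShear (R.toFun q))) : Function.Bijective f := by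
  rw [show f = L.toFun ∘ quadShear ∘ R.toFun from funext h]
  exact L.bijective.comp (quadShear_bijective.comp R.bijective)

theorem exists_aff_eq_quadShear {μ d e p1 p2 g0 h0 : ℂ} (hμ : μ ≠ 0)
    (hdet : d * p2 - e * p1 ≠ 0) :
    ∃ L R : Aff, ∀ q : ℂ × ℂ,
      (μ ^ 2 * (d * q.1 + e * q.2) ^ 2 + p1 * q.1 + p2 * q.2 + g0, d * q.1 + e * q.2 + h0)
        = L.toFun (quadShear (R.toFun q)) := by
  have hμ2 : μ ^ 2 ≠ 0 := pow_ne_zero 2 hμ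
  refine ⟨⟨μ ^ 2, 0, 0, 1, 0, 0, by simpa using hμ2⟩,
    ⟨d, e, p1 / μ ^ 2 - 2 * h0 * d, p2 / μ ^ 2 - 2 * h0 * e, h0, g0 / μ ^ 2 - h0 ^ 2, ?_⟩,
    fun q => ?_⟩
  · intro h
    exact hdet (by linear_combination μ ^ 2 * h - (d * p2 - e * p1) * mul_inv_cancel₀ hμ2)
  · simp only [Aff.toFun, quadShear, Prod.ext_iff]
    constructor
    · field_simp
      ring
    · ring

/-- Let `f = (g₂ + g₁ + g₀, h₁ + h₀)` with `g₂` a nonzero square of a linear form, and the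
nonzero linear form `h₁` dividing `g₂` but not `g₁`. Then `f` is linearly equivalent to
`(x² + y, x)`; in particular `f` is a polynomial automorphism of `ℂ²`. -/
theorem stmt_15 (a b c p1 p2 g0 d e h0 : ℂ)
    (hg2 : ¬ (a = 0 ∧ b = 0 ∧ c = 0))
    (hsq : ∃ s t : ℂ, ∀ x y : ℂ, a * x ^ 2 + b * x * y + c * y ^ 2 = (s * x + t * y) ^ 2)
    (hh1 : ¬ (d = 0 ∧ e = 0))
    (hdvd : ∃ s t : ℂ, ∀ x y : ℂ,
        a * x ^ 2 + b * x * y + c * y ^ 2 = (d * x + e * y) * (s * x + t * y))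
    (hndvd : ¬ ∃ k : ℂ, ∀ x y : ℂ, p1 * x + p2 * y = k * (d * x + e * y)) :
    (∃ L R : Aff, ∀ q : ℂ × ℂ,
        (a * q.1 ^ 2 + b * q.1 * q.2 + c * q.2 ^ 2 + p1 * q.1 + p2 * q.2 + g0,
          d * q.1 + e * q.2 + h0)
        = L.toFun (((R.toFun q).1 ^ 2 + (R.toFun q).2, (R.toFun q).1))) ∧
      Function.Bijective (fun q : ℂ × ℂ =>
        (a * q.1 ^ 2 + b * q.1 * q.2 + c * q.2 ^ 2 + p1 * q.1 + p2 * q.2 + g0,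
          d * q.1 + e * q.2 + h0)) := by
  obtain ⟨s, t, hst⟩ := hsq
  obtain ⟨s', t', hdt⟩ := hdvd
  obtain ⟨ha, hb, hc⟩ := coeffs_eq_of_forall_eq_sq hst
  obtain ⟨μ, rfl, rfl⟩ :=
    exists_eq_mul_of_sq_eq_mul hh1 fun x y => (hst x y).symm.trans (hdt x y)
  have hμ : μ ≠ 0 := by
    rintro rfl
    exact hg2 (by simp [ha, hb, hc])
  have hdet : d * p2 - e * p1 ≠ 0 := by
    intro h
    obtain ⟨k, rfl, rfl⟩ := exists_eq_mul_of_mul_eq_mul (s := p1) (t := p2) hh1 (by linear_combination -h)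
    exact hndvd ⟨k, fun x y => by ring⟩
  obtain ⟨L, R, hLR⟩ := exists_aff_eq_quadShear (g0 := g0) (h0 := h0) hμ hdet
  have hf : ∀ q : ℂ × ℂ,
      (a * q.1 ^ 2 + b * q.1 * q.2 + c * q.2 ^ 2 + p1 * q.1 + p2 * q.2 + g0, d * q.1 + e * q.2 + h0)
        = L.toFun (quadShear (R.toFun q)) := fun q => by
    rw [← hLR, ha, hb, hc]
    ring_nf
  exact ⟨⟨L, R, hf⟩, bijective_of_eq_aff_comp_quadShear hf⟩
end

section
/- The stabilizer of f(x,y) = (x^2, y^2) in GA(2) × GA(2) (acting by (L,R)·f = L ∘ f ∘ R) equals {((α^{-2}x, β^{-2}y), (αx, βy)) : α, β ∈ C^*} ∪ {((β^{-2}y, α^{-2}x), (αy, βx)) : α, β ∈ C^*}. -/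
/-- The stabilizer of `f(x,y) = (x², y²)` under `(L,R)·f = L ∘ f ∘ R` equals
`{((α⁻²x, β⁻²y), (αx, βy))} ∪ {((β⁻²y, α⁻²x), (αy, βx))}`, `α, β ∈ ℂ*`. -/
theorem stmt_16 (L R : Aff) :
    (∀ p : ℂ × ℂ, L.toFun (((R.toFun p).1 ^ 2, (R.toFun p).2 ^ 2)) = (p.1 ^ 2, p.2 ^ 2)) ↔
      ∃ α β : ℂ, α ≠ 0 ∧ β ≠ 0 ∧
        (((∀ q : ℂ × ℂ, L.toFun q = (q.1 / α ^ 2, q.2 / β ^ 2)) ∧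
          (∀ p : ℂ × ℂ, R.toFun p = (α * p.1, β * p.2))) ∨
         ((∀ q : ℂ × ℂ, L.toFun q = (q.2 / β ^ 2, q.1 / α ^ 2)) ∧
          (∀ p : ℂ × ℂ, R.toFun p = (α * p.2, β * p.1)))) := by
  obtain ⟨m11, m12, m21, m22, s1, s2, hM⟩ := L
  obtain ⟨a, b, c, d, e, f, hR⟩ := R
  simp only [Aff.toFun, Prod.mk.injEq] at *
  constructor
  · intro h
    have H : ∀ x y : ℂ,
        (m11 * (a * x + b * y + e) ^ 2 + m12 * (c * x + d * y + f) ^ 2 + s1 = x ^ 2) ∧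
        (m21 * (a * x + b * y + e) ^ 2 + m22 * (c * x + d * y + f) ^ 2 + s2 = y ^ 2) := by
      intro x y
      have hx := h (x, y)
      exact ⟨by linear_combination hx.1, by linear_combination hx.2⟩
    obtain ⟨P00, Q00⟩ := H 0 0
    obtain ⟨P10, Q10⟩ := H 1 0
    obtain ⟨Pm10, Qm10⟩ := H (-1) 0
    obtain ⟨P01, Q01⟩ := H 0 1
    obtain ⟨P0m1, Q0m1⟩ := H 0 (-1)
    obtain ⟨P11, Q11⟩ := H 1 1
    have Exx1 : m11 * a ^ 2 + m12 * c ^ 2 = 1 := by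
      linear_combination P10 / 2 + Pm10 / 2 - P00
    have Exx2 : m21 * a ^ 2 + m22 * c ^ 2 = 0 := by
      linear_combination Q10 / 2 + Qm10 / 2 - Q00
    have Eyy1 : m11 * b ^ 2 + m12 * d ^ 2 = 0 := by
      linear_combination P01 / 2 + P0m1 / 2 - P00
    have Eyy2 : m21 * b ^ 2 + m22 * d ^ 2 = 1 := by
      linear_combination Q01 / 2 + Q0m1 / 2 - Q00
    have Ex1 : m11 * (a * e) + m12 * (c * f) = 0 := by
      linear_combination (P10 - Pm10) / 4
    have Ex2 : m21 * (a * e) + m22 * (c * f) = 0 := by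
      linear_combination (Q10 - Qm10) / 4
    have Ey1 : m11 * (b * e) + m12 * (d * f) = 0 := by
      linear_combination (P01 - P0m1) / 4
    have Ey2 : m21 * (b * e) + m22 * (d * f) = 0 := by
      linear_combination (Q01 - Q0m1) / 4
    have Exy1 : m11 * (a * b) + m12 * (c * d) = 0 := by
      linear_combination (P11 - P10 - P01 + P00) / 2
    have Exy2 : m21 * (a * b) + m22 * (c * d) = 0 := by
      linear_combination (Q11 - Q10 - Q01 + Q00) / 2
    have E01 : m11 * e ^ 2 + m12 * f ^ 2 + s1 = 0 := by linear_combination P00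
    have E02 : m21 * e ^ 2 + m22 * f ^ 2 + s2 = 0 := by linear_combination Q00
    have solve : ∀ u v : ℂ, m11 * u + m12 * v = 0 → m21 * u + m22 * v = 0 →
        u = 0 ∧ v = 0 := by
      intro u v h1 h2
      constructor
      · have : (m11 * m22 - m12 * m21) * u = 0 := by linear_combination m22 * h1 - m12 * h2
        exact (mul_eq_zero.mp this).resolve_left hM
      · have : (m11 * m22 - m12 * m21) * v = 0 := by linear_combination m11 * h2 - m21 * h1
        exact (mul_eq_zero.mp this).resolve_left hM
    obtain ⟨hab, hcd⟩ := solve _ _ Exy1 Exy2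
    obtain ⟨hae, hcf⟩ := solve _ _ Ex1 Ex2
    obtain ⟨hbe, hdf⟩ := solve _ _ Ey1 Ey2
    by_cases ha : a = 0
    · subst ha
      have hbc : b * c ≠ 0 := fun hz => hR (by linear_combination -hz)
      have hb : b ≠ 0 := left_ne_zero_of_mul hbc
      have hc : c ≠ 0 := right_ne_zero_of_mul hbc
      have hd : d = 0 := by
        rcases mul_eq_zero.mp hcd with h' | h' <;> [exact absurd h' hc; exact h']
      have hf : f = 0 := by
        rcases mul_eq_zero.mp hcf with h' | h' <;> [exact absurd h' hc; exact h']
      have he : e = 0 := by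
        rcases mul_eq_zero.mp hbe with h' | h' <;> [exact absurd h' hb; exact h']
      subst hd; subst hf; subst he
      have hm11 : m11 = 0 := by
        have h' : m11 * b ^ 2 = 0 := by linear_combination Eyy1
        exact (mul_eq_zero.mp h').resolve_right (pow_ne_zero 2 hb)
      have hm22 : m22 = 0 := by
        have h' : m22 * c ^ 2 = 0 := by linear_combination Exx2
        exact (mul_eq_zero.mp h').resolve_right (pow_ne_zero 2 hc)
      have hs1 : s1 = 0 := by linear_combination E01
      have hs2 : s2 = 0 := by linear_combination E02
      refine ⟨b, c, hb, hc, Or.inr ⟨fun q => ⟨?_, ?_⟩, fun p => ⟨by ring, by ring⟩⟩⟩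
      · rw [hm11, hs1, eq_div_iff (pow_ne_zero 2 hc)]
        linear_combination q.2 * Exx1
      · rw [hm22, hs2, eq_div_iff (pow_ne_zero 2 hb)]
        linear_combination q.1 * Eyy2
    · have hb : b = 0 := (mul_eq_zero.mp hab).resolve_left ha
      have he : e = 0 := (mul_eq_zero.mp hae).resolve_left ha
      subst hb; subst he
      have hd : d ≠ 0 := fun hz => hR (by rw [hz]; ring)
      have hc : c = 0 := by
        rcases mul_eq_zero.mp hcd with h' | h' <;> [exact h'; exact absurd h' hd]
      have hf : f = 0 := by
        rcases mul_eq_zero.mp hdf with h' | h' <;> [exact absurd h' hd; exact h']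
      subst hc; subst hf
      have hm12 : m12 = 0 := by
        have h' : m12 * d ^ 2 = 0 := by linear_combination Eyy1
        exact (mul_eq_zero.mp h').resolve_right (pow_ne_zero 2 hd)
      have hm21 : m21 = 0 := by
        have h' : m21 * a ^ 2 = 0 := by linear_combination Exx2
        exact (mul_eq_zero.mp h').resolve_right (pow_ne_zero 2 ha)
      have hs1 : s1 = 0 := by linear_combination E01
      have hs2 : s2 = 0 := by linear_combination E02
      refine ⟨a, d, ha, hd, Or.inl ⟨fun q => ⟨?_, ?_⟩, fun p => ⟨by ring, by ring⟩⟩⟩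
      · rw [hm12, hs1, eq_div_iff (pow_ne_zero 2 ha)]
        linear_combination q.1 * Exx1
      · rw [hm21, hs2, eq_div_iff (pow_ne_zero 2 hd)]
        linear_combination q.2 * Eyy2
  · rintro ⟨α, β, hα, hβ, ⟨hL, hRf⟩ | ⟨hL, hRf⟩⟩ p
    · obtain ⟨h1, h2⟩ := hRf p
      obtain ⟨g1, g2⟩ := hL ((α * p.1) ^ 2, (β * p.2) ^ 2)
      rw [h1, h2]
      constructor
      · rw [g1]; field_simp
      · rw [g2]; field_simp
    · obtain ⟨h1, h2⟩ := hRf p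
      obtain ⟨g1, g2⟩ := hL ((α * p.2) ^ 2, (β * p.1) ^ 2)
      rw [h1, h2]
      constructor
      · rw [g1]; field_simp
      · rw [g2]; field_simp
end

section
/- The maps f(x,y) = (x^2+y, y^2+x) and g(x,y) = (x^2 - y^2 + x, 2xy - y) from R^2 to R^2 are not linearly equivalent over R: there are no affine automorphisms L, R of R^2 with f = L ∘ g ∘ R. (Indeed det Φ_1(f) < 0 while det Φ_1(g) > 0, and the sign of det Φ_1 is invariant.) -/
/-- A real affine automorphism of `ℝ²`. -/
structure AffR where
  m11 : ℝ
  m12 : ℝ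
  m21 : ℝ
  m22 : ℝ
  t1 : ℝ
  t2 : ℝ
  inv : m11 * m22 - m12 * m21 ≠ 0

/-- The underlying map of a real affine automorphism. -/
def AffR.toFun (A : AffR) (p : ℝ × ℝ) : ℝ × ℝ :=
  (A.m11 * p.1 + A.m12 * p.2 + A.t1, A.m21 * p.1 + A.m22 * p.2 + A.t2)

/-- The real maps `f(x,y) = (x²+y, y²+x)` and `g(x,y) = (x²-y²+x, 2xy-y)` are not linearly
equivalent over `ℝ`: there are no affine automorphisms `L, R` of `ℝ²` with `f = L ∘ g ∘ R`. -/
theorem stmt_19 :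
    ¬ ∃ L R : AffR, ∀ p : ℝ × ℝ,
      (p.1 ^ 2 + p.2, p.2 ^ 2 + p.1)
        = L.toFun (((R.toFun p).1 ^ 2 - (R.toFun p).2 ^ 2 + (R.toFun p).1,
            2 * (R.toFun p).1 * (R.toFun p).2 - (R.toFun p).2)) := by
  rintro ⟨L, R, h⟩
  obtain ⟨a, b, c, d, e, f, hL⟩ := L
  obtain ⟨p, q, r, s, t, u, hR⟩ := R
  simp only [AffR.toFun, Prod.mk.injEq] at h
  have h00 := (h (0, 0)).1
  have h10 := (h (1, 0)).1
  have hm10 := (h (-1, 0)).1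
  have h01 := (h (0, 1)).1
  have h0m1 := (h (0, -1)).1
  have h11 := (h (1, 1)).1
  simp only at h00 h10 hm10 h01 h0m1 h11
  have E1 : a * (p ^ 2 - r ^ 2) + 2 * b * p * r = 1 := by
    linear_combination -(h10 + hm10 - 2 * h00) / 2
  have E2 : a * (p * q - r * s) + b * (p * s + q * r) = 0 := by
    linear_combination -(h11 - h10 - h01 + h00) / 2
  have E3 : a * (q ^ 2 - s ^ 2) + 2 * b * q * s = 0 := by
    linear_combination -(h01 + h0m1 - 2 * h00) / 2
  clear h h00 h10 hm10 h01 h0m1 h11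
  have key : (a ^ 2 + b ^ 2) * (p * s - q * r) ^ 2 = 0 := by
    linear_combination (a * (p * q - r * s) + b * (p * s + q * r)) * E2
      - (a * (p ^ 2 - r ^ 2) + 2 * b * p * r) * E3
  have hdet : (p * s - q * r) ^ 2 ≠ 0 := pow_ne_zero _ hR
  have hab : a ^ 2 + b ^ 2 = 0 := by
    rcases mul_eq_zero.mp key with h' | h'
    · exact h'
    · exact absurd h' hdet
  have ha : a = 0 := by nlinarith [sq_nonneg a, sq_nonneg b]
  have hb : b = 0 := by nlinarith [sq_nonneg a, sq_nonneg b]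
  rw [ha, hb] at E1
  norm_num at E1
end
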